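/- arXiv:2307.16665 — 5 statements merged into one kernel-verified Lean document; each statement's English description precedes it below -/
import Mathlib

section
/- Let d ∈ ℕ with d ≥ 1, let (λ_n)_{n∈ℕ} be a strictly increasing sequence of positive real numbers for which there exist c₀ > 0 and n₀ ∈ ℕ with λ_n ≥ c₀ n^{2/d} for all n ≥ n₀, and let (a_n)_{n∈ℕ} be a real sequence with Σ_{n=1}^∞ |a_n|² < ∞. Let (ℓ_k)_{k∈ℕ} ⊂ ℕ satisfy lim_{k→∞} ℓ_k = ∞. If for every k ∈ ℕ the series Σ_{n=1}^∞ a_n λ_n^{−ℓ_k} converges absolutely and Σ_{n=1}^∞ a_n λ_n^{−ℓ_k} = 0, then a_n = 0 for all n ∈ ℕ. -/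
/-!
Induction on `m`: if `a_i = 0` for all `i < m`, multiplying the vanishing sums by `λ_m ^ L` gives
`Σ_n a_n (λ_m / λ_n) ^ L = 0`. Since `λ` is strictly increasing, every ratio `λ_m / λ_n` with
`n > m` is `< 1`, so by dominated convergence (dominated by the absolutely convergent series at a
fixed exponent) these sums tend to `a_m` as `L → ∞`; hence `a_m = 0`.
-/

open Filter Topology

section

variable {lam a : ℕ → ℝ} {m : ℕ}

theorem tendsto_tsum_mul_div_pow (hpos : ∀ n, 0 < lam n) (hmono : StrictMono lam)
    (hlow : ∀ i < m, a i = 0) {L₀ : ℕ} (hL₀ : Summable fun n => |a n / lam n ^ L₀|) :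
    Tendsto (fun L : ℕ => ∑' n, a n * (lam m / lam n) ^ L) atTop (𝓝 (a m)) := by
  have hratio_nonneg (n : ℕ) : 0 ≤ lam m / lam n := (div_pos (hpos m) (hpos n)).le
  have hlim (n : ℕ) : Tendsto (fun L : ℕ => a n * (lam m / lam n) ^ L) atTop
      (𝓝 (if n = m then a m else 0)) := by
    rcases lt_trichotomy n m with hn | rfl | hn
    · simp [hn.ne, hlow n hn]
    · simp [div_self (hpos n).ne']
    · rw [if_neg hn.ne', ← mul_zero (a n)]
      exact (tendsto_pow_atTop_nhds_zero_of_lt_one (hratio_nonneg n)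
        ((div_lt_one (hpos n)).2 (hmono hn))).const_mul _
  have hbound : ∀ᶠ L in atTop, ∀ n,
      ‖a n * (lam m / lam n) ^ L‖ ≤ lam m ^ L₀ * |a n / lam n ^ L₀| := by
    filter_upwards [eventually_ge_atTop L₀] with L hL n
    rcases lt_or_ge n m with hn | hn
    · simp [hlow n hn]
    · have hratio_le_one : lam m / lam n ≤ 1 := (div_le_one (hpos n)).2 (hmono.monotone hn)
      calc ‖a n * (lam m / lam n) ^ L‖ = |a n| * (lam m / lam n) ^ L := by
            rw [Real.norm_eq_abs, abs_mul, abs_of_nonneg (pow_nonneg (hratio_nonneg n) _)]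
        _ ≤ |a n| * (lam m / lam n) ^ L₀ := mul_le_mul_of_nonneg_left
            (pow_le_pow_of_le_one (hratio_nonneg n) hratio_le_one hL) (abs_nonneg _)
        _ = lam m ^ L₀ * |a n / lam n ^ L₀| := by
            rw [abs_div, abs_of_pos (pow_pos (hpos n) _), div_pow]
            ring
  simpa using tendsto_tsum_of_dominated_convergence (hL₀.mul_left _) hlim hbound

end

theorem all_coeffs_zero_of_vanishing_sums_general
    (lam : ℕ → ℝ) (hpos : ∀ n, 0 < lam n) (hmono : StrictMono lam)
    (a : ℕ → ℝ)
    (ℓ : ℕ → ℕ) (hℓ : Filter.Tendsto ℓ Filter.atTop Filter.atTop)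
    (habs : ∀ k, Summable fun n => |a n / lam n ^ ℓ k|)
    (hsum : ∀ k, ∑' n, a n / lam n ^ ℓ k = 0) :
    ∀ n, a n = 0 := by
  intro n
  induction n using Nat.strong_induction_on with
  | _ m hlow =>
    have hvanish (k : ℕ) : ∑' n, a n * (lam m / lam n) ^ ℓ k = 0 := by
      simp_rw [div_pow, mul_div_left_comm (a _), tsum_mul_left, hsum k, mul_zero]
    have hlim := (tendsto_tsum_mul_div_pow hpos hmono hlow (habs 0)).comp hℓ
    exact tendsto_nhds_unique hlim (tendsto_const_nhds.congr fun k => (hvanish k).symm)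

/-- Lemma 6: if `(λ_n)` is strictly increasing and grows at least like `n^{2/d}`,
`(a_n)` is square-summable, and `Σ_n a_n λ_n^{−ℓ_k} = 0` (absolutely convergent)
for a sequence `ℓ_k → ∞`, then all `a_n` vanish. -/
theorem all_coeffs_zero_of_vanishing_sums (d : ℕ) (hd : 1 ≤ d)
    (lam : ℕ → ℝ) (hpos : ∀ n, 0 < lam n) (hmono : StrictMono lam)
    (c₀ : ℝ) (hc₀ : 0 < c₀) (n₀ : ℕ)
    (hgrowth : ∀ n ≥ n₀, c₀ * (n : ℝ) ^ ((2 : ℝ) / d) ≤ lam n)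
    (a : ℕ → ℝ) (ha : Summable fun n => |a n| ^ 2)
    (ℓ : ℕ → ℕ) (hℓ : Filter.Tendsto ℓ Filter.atTop Filter.atTop)
    (habs : ∀ k, Summable fun n => |a n / lam n ^ ℓ k|)
    (hsum : ∀ k, ∑' n, a n / lam n ^ ℓ k = 0) :
    ∀ n, a n = 0 :=
  all_coeffs_zero_of_vanishing_sums_general lam hpos hmono a ℓ hℓ habs hsum
end

section
/- Let T > 0, σ > 0, μ ∈ L^∞(0,T), and let ℓ₀ ∈ ℕ ∪ {0} be such that ∫₀^T (−s)^m μ(s) ds = 0 for all integers m with 0 ≤ m ≤ ℓ₀ − 1 (no condition when ℓ₀ = 0). Set μ_{ℓ₀} := ∫₀^T (−s)^{ℓ₀} μ(s) ds. Then the function t ↦ ∫₀^T (t−s)^{−σ} μ(s) ds − C(−σ,ℓ₀) μ_{ℓ₀} t^{−σ−ℓ₀} is O(t^{−σ−ℓ₀−1}) as t → ∞. -/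
/-!
For `s ∈ [0, T]` and `t ≥ 2T`, Taylor's formula expands `(t - s) ^ (-σ)` in powers of `s`:
the `m`-th term is `C(-σ, m) t^(-σ-m) (-s)^m`, and the remainder after order `ℓ₀` is
`O(t^(-σ-ℓ₀-1))` uniformly in `s`, since `t - s ≥ t / 2`. Integrating against `μ`, the
vanishing moments remove every term of order `< ℓ₀`, and the remainder contributes at most
`O(t^(-σ-ℓ₀-1)) · ‖μ‖₁`.
-/

open MeasureTheory

/-- The generalized binomial coefficient
`C(x,ℓ) = x(x−1)⋯(x−ℓ+1)/ℓ!`, with `C(x,0) = 1`. -/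
noncomputable def genBinom (x : ℝ) (ℓ : ℕ) : ℝ :=
  (∏ i ∈ Finset.range ℓ, (x - i)) / (Nat.factorial ℓ)

open Finset Set

lemma genBinom_eq_descPochhammer_eval_div (x : ℝ) (ℓ : ℕ) :
    genBinom x ℓ = (descPochhammer ℝ ℓ).eval x / ℓ.factorial := by
  rw [descPochhammer_eval_eq_prod_range, genBinom]

lemma rpow_le_two_rpow_abs_mul_rpow {x t : ℝ} (b : ℝ) (ht : 0 < t) (hx : t / 2 ≤ x)
    (hxt : x ≤ t) : x ^ b ≤ 2 ^ |b| * t ^ b := by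
  rcases le_or_gt 0 b with hb | hb
  · calc x ^ b ≤ t ^ b := Real.rpow_le_rpow (by linarith) hxt hb
      _ ≤ 2 ^ |b| * t ^ b :=
        le_mul_of_one_le_left (by positivity) (Real.one_le_rpow (by norm_num) (abs_nonneg b))
  · calc x ^ b ≤ (t / 2) ^ b := Real.rpow_le_rpow_of_nonpos (by positivity) hx hb.le
      _ = 2 ^ |b| * t ^ b := by
        rw [Real.div_rpow ht.le zero_le_two, abs_of_neg hb, Real.rpow_neg zero_le_two]
        ring

lemma iteratedDerivWithin_const_sub_rpow {a t x : ℝ} {s : Set ℝ} (hs : UniqueDiffOn ℝ s)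
    (hx : x ∈ s) (hxt : x < t) (n : ℕ) :
    iteratedDerivWithin n (fun y => (t - y) ^ a) s x
      = (-1) ^ n * (descPochhammer ℝ n).eval a * (t - x) ^ (a - n) := by
  have hsmooth : ContDiffAt ℝ n (fun y => (t - y) ^ a) x :=
    (Real.contDiffAt_rpow_const_of_ne (sub_pos.2 hxt).ne').comp x
      (contDiffAt_const.sub contDiffAt_id)
  rw [iteratedDerivWithin_eq_iteratedDeriv hs hsmooth hx,
    iteratedDeriv_comp_const_sub n (fun y => y ^ a)]
  simp only [iteratedDeriv_eq_iterate, Real.iter_deriv_rpow_const, smul_eq_mul, mul_assoc]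

theorem abs_const_sub_rpow_sub_binomial_sum_le (a : ℝ) {T : ℝ} (hT : 0 < T) (n : ℕ) :
    ∃ D ≥ 0, ∀ t ≥ 2 * T, ∀ s ∈ Icc 0 T,
      |(t - s) ^ a - ∑ m ∈ range (n + 1), genBinom a m * t ^ (a - m) * (-s) ^ m|
        ≤ D * t ^ (a - n - 1) := by
  set K := |(descPochhammer ℝ (n + 1)).eval a| * 2 ^ |a - n - 1|
  refine ⟨K * T ^ (n + 1) / n.factorial, by positivity, fun t ht s hs => ?_⟩
  have htT : T < t := by linarith
  have hlt : ∀ y ∈ Icc 0 T, y < t := fun y hy => hy.2.trans_lt htT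
  have hsmooth : ContDiffOn ℝ (n + 1) (fun y => (t - y) ^ a) (Icc 0 T) := fun y hy =>
    ((Real.contDiffAt_rpow_const_of_ne (sub_pos.2 (hlt y hy)).ne').comp y
      (contDiffAt_const.sub contDiffAt_id)).contDiffWithinAt
  have hderiv : ∀ y ∈ Icc 0 T,
      ‖iteratedDerivWithin (n + 1) (fun y => (t - y) ^ a) (Icc 0 T) y‖
        ≤ K * t ^ (a - n - 1) := by
    intro y hy
    rw [iteratedDerivWithin_const_sub_rpow (uniqueDiffOn_Icc hT) hy (hlt y hy), norm_mul,
      norm_mul, norm_pow, norm_neg, norm_one, one_pow, one_mul, Real.norm_eq_abs,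
      Real.norm_eq_abs, abs_of_pos (Real.rpow_pos_of_pos (sub_pos.2 (hlt y hy)) _), mul_assoc]
    push_cast
    rw [← sub_sub]
    exact mul_le_mul_of_nonneg_left (rpow_le_two_rpow_abs_mul_rpow _ (by linarith)
      (by linarith [hy.2]) (by linarith [hy.1])) (abs_nonneg _)
  have htaylor := taylor_mean_remainder_bound hT.le hsmooth hs hderiv
  have hpoly : taylorWithinEval (fun y => (t - y) ^ a) n (Icc 0 T) 0 s
      = ∑ m ∈ range (n + 1), genBinom a m * t ^ (a - m) * (-s) ^ m := by
    rw [taylor_within_apply]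
    refine Finset.sum_congr rfl fun m _ => ?_
    rw [iteratedDerivWithin_const_sub_rpow (uniqueDiffOn_Icc hT) ⟨le_rfl, hT.le⟩ (by linarith),
      genBinom_eq_descPochhammer_eval_div, smul_eq_mul, neg_pow, sub_zero, sub_zero]
    field_simp
    ring
  rw [hpoly, Real.norm_eq_abs, sub_zero] at htaylor
  calc _ ≤ K * t ^ (a - n - 1) * s ^ (n + 1) / n.factorial := htaylor
    _ ≤ K * t ^ (a - n - 1) * T ^ (n + 1) / n.factorial := by
      gcongr
      exacts [mul_nonneg (by positivity) (Real.rpow_nonneg (by linarith) _), hs.1, hs.2]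
    _ = K * T ^ (n + 1) / n.factorial * t ^ (a - n - 1) := by ring

lemma abs_integral_mul_le {α : Type*} [MeasurableSpace α] {ν : Measure α} {f g : α → ℝ}
    {K : ℝ} (hg : Integrable g ν) (hf : ∀ᵐ x ∂ν, |f x| ≤ K) :
    |∫ x, f x * g x ∂ν| ≤ K * ∫ x, |g x| ∂ν := by
  rw [← Real.norm_eq_abs]
  refine (norm_integral_le_of_norm_le (hg.abs.const_mul K) ?_).trans_eq
    (integral_const_mul K _)
  filter_upwards [hf] with x hfx
  rw [norm_mul, Real.norm_eq_abs]
  exact mul_le_mul_of_nonneg_right hfx (abs_nonneg _)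

section Moments

variable {f μ : ℝ → ℝ} {ℓ : ℕ} {ν : Measure ℝ}

lemma integral_sum_mul_eq_of_moments_eq_zero
    (hint : ∀ m ≤ ℓ, Integrable (fun s => (-s) ^ m * μ s) ν)
    (hmom : ∀ m < ℓ, ∫ s, (-s) ^ m * μ s ∂ν = 0) (c : ℕ → ℝ) :
    ∫ s, (∑ m ∈ range (ℓ + 1), c m * (-s) ^ m) * μ s ∂ν = c ℓ * ∫ s, (-s) ^ ℓ * μ s ∂ν := by
  simp_rw [Finset.sum_mul, mul_assoc]
  rw [integral_finsetSum _ fun m hm =>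
    (hint m (Nat.lt_succ_iff.1 (mem_range.1 hm))).const_mul _]
  simp_rw [integral_const_mul]
  rw [Finset.sum_range_succ, Finset.sum_eq_zero fun m hm => by rw [hmom m (mem_range.1 hm),
    mul_zero], zero_add]

lemma integral_mul_sub_eq_of_moments_eq_zero (hf : Integrable (fun s => f s * μ s) ν)
    (hint : ∀ m ≤ ℓ, Integrable (fun s => (-s) ^ m * μ s) ν)
    (hmom : ∀ m < ℓ, ∫ s, (-s) ^ m * μ s ∂ν = 0) (c : ℕ → ℝ) :
    ∫ s, f s * μ s ∂ν - c ℓ * ∫ s, (-s) ^ ℓ * μ s ∂ν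
      = ∫ s, (f s - ∑ m ∈ range (ℓ + 1), c m * (-s) ^ m) * μ s ∂ν := by
  have hsum : Integrable (fun s => (∑ m ∈ range (ℓ + 1), c m * (-s) ^ m) * μ s) ν := by
    simp_rw [Finset.sum_mul, mul_assoc]
    exact integrable_finsetSum _ fun m hm =>
      (hint m (Nat.lt_succ_iff.1 (mem_range.1 hm))).const_mul _
  rw [← integral_sum_mul_eq_of_moments_eq_zero hint hmom c, ← integral_sub hf hsum]
  simp_rw [sub_mul]

end Moments

theorem integral_asymptotics_general (T σ : ℝ) (hT : 0 < T)
    (μ : ℝ → ℝ) (hμ : MemLp μ ⊤ (volume.restrict (Set.Ioo (0:ℝ) T)))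
    (ℓ₀ : ℕ) (hmom : ∀ m < ℓ₀, (∫ s in Set.Ioo (0:ℝ) T, (-s) ^ m * μ s) = 0) :
    ∃ C > 0, ∃ t₀ : ℝ, ∀ t ≥ t₀,
      |(∫ s in Set.Ioo (0:ℝ) T, (t - s) ^ (-σ) * μ s) -
          genBinom (-σ) ℓ₀ * (∫ s in Set.Ioo (0:ℝ) T, (-s) ^ ℓ₀ * μ s) *
            t ^ (-σ - (ℓ₀ : ℝ))|
        ≤ C * t ^ (-σ - (ℓ₀ : ℝ) - 1) := by
  have : IsFiniteMeasure (volume.restrict (Ioo (0:ℝ) T)) :=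
    isFiniteMeasure_restrict.2 measure_Ioo_lt_top.ne
  have hμ₁ : IntegrableOn μ (Ioo 0 T) := hμ.integrable le_top
  have hint : ∀ g : ℝ → ℝ, ContinuousOn g (Icc 0 T) →
      IntegrableOn (fun s => g s * μ s) (Ioo 0 T) := fun g hg =>
    hμ₁.continuousOn_mul_of_subset hg isCompact_Icc measurableSet_Ioo Ioo_subset_Icc_self
  obtain ⟨D, hD, htaylor⟩ := abs_const_sub_rpow_sub_binomial_sum_le (-σ) hT ℓ₀
  have hμnorm : 0 ≤ ∫ s in Ioo 0 T, |μ s| := integral_nonneg fun s => abs_nonneg _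
  refine ⟨D * (∫ s in Ioo 0 T, |μ s|) + 1,
    add_pos_of_nonneg_of_pos (mul_nonneg hD hμnorm) one_pos, 2 * T, fun t ht => ?_⟩
  have hcont : ContinuousOn (fun s => (t - s) ^ (-σ)) (Icc 0 T) := fun s hs =>
    (continuousAt_const.sub continuousAt_id).rpow_const
      (Or.inl (sub_pos.2 (show s < t by linarith [hs.2])).ne') |>.continuousWithinAt
  rw [mul_right_comm, integral_mul_sub_eq_of_moments_eq_zero (hint _ hcont)
    (fun m _ => hint _ (by fun_prop)) hmom fun m => genBinom (-σ) m * t ^ (-σ - m)]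
  calc _ ≤ D * t ^ (-σ - ℓ₀ - 1) * ∫ s in Ioo 0 T, |μ s| :=
        abs_integral_mul_le hμ₁ <| ae_restrict_of_forall_mem measurableSet_Ioo fun s hs =>
          htaylor t ht s (Ioo_subset_Icc_self hs)
    _ ≤ _ := by
      rw [mul_right_comm]
      exact mul_le_mul_of_nonneg_right (le_add_of_nonneg_right zero_le_one)
        (Real.rpow_nonneg (by linarith) _)

/-- Formula (3.4): if the moments of `μ` of order `< ℓ₀` vanish, then
`∫₀^T (t−s)^{−σ} μ(s) ds = C(−σ,ℓ₀) μ_{ℓ₀} t^{−σ−ℓ₀} + O(t^{−σ−ℓ₀−1})` as `t → ∞`. -/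
theorem integral_asymptotics (T σ : ℝ) (hT : 0 < T) (hσ : 0 < σ)
    (μ : ℝ → ℝ) (hμ : MemLp μ ⊤ (volume.restrict (Set.Ioo (0:ℝ) T)))
    (ℓ₀ : ℕ) (hmom : ∀ m < ℓ₀, (∫ s in Set.Ioo (0:ℝ) T, (-s) ^ m * μ s) = 0) :
    ∃ C > 0, ∃ t₀ : ℝ, ∀ t ≥ t₀,
      |(∫ s in Set.Ioo (0:ℝ) T, (t - s) ^ (-σ) * μ s) -
          genBinom (-σ) ℓ₀ * (∫ s in Set.Ioo (0:ℝ) T, (-s) ^ ℓ₀ * μ s) *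
            t ^ (-σ - (ℓ₀ : ℝ))|
        ≤ C * t ^ (-σ - (ℓ₀ : ℝ) - 1) :=
  integral_asymptotics_general T σ hT μ hμ ℓ₀ hmom
end

section
/- Let λ ∈ ℝ, λ ≠ 0, let a, f ∈ ℝ, and let 0 < T < T₁ < T₂. Suppose u : [0,∞) → ℝ is continuous, differentiable on (0,T) ∪ (T,∞), satisfies u(0) = a, u′(t) = −λ u(t) + f for t ∈ (0,T), and u′(t) = −λ u(t) for t > T. Then u(t) = 0 for all t ∈ (T₁,T₂) if and only if aλ + (e^{λT} − 1) f = 0. -/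
/-! Multiplying by the integrating factor `e^{λt}` turns `u' = -λu + c` into
`(λ e^{λt} u - c e^{λt})' = 0`. On `[0,T]` this gives `λ e^{λT} u(T) = aλ + (e^{λT} - 1) f`, and
for `t > T` the quantity `λ e^{λt} u(t)` stays equal to that value; since `λ ≠ 0` and
`e^{λt} > 0`, `u` vanishes anywhere after `T` exactly when this constant is zero. -/

open Set Real

theorem eq_of_hasDerivAt_zero {g : ℝ → ℝ} {s t : ℝ} (hst : s ≤ t)
    (hcont : ContinuousOn g (Icc s t)) (hderiv : ∀ x ∈ Ioo s t, HasDerivAt g 0 x) :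
    g t = g s := by
  rcases hst.eq_or_lt with rfl | hst
  · rfl
  obtain ⟨_, _, hslope⟩ := exists_hasDerivAt_eq_slope g (fun _ => 0) hst hcont hderiv
  rw [eq_comm, div_eq_zero_iff, sub_eq_zero, sub_eq_zero] at hslope
  exact hslope.resolve_right hst.ne'

theorem mul_exp_mul_sub_eq_of_hasDerivAt_neg_mul_add {u : ℝ → ℝ} {lam c s t : ℝ} (hst : s ≤ t)
    (hcont : ContinuousOn u (Icc s t))
    (hode : ∀ x ∈ Ioo s t, HasDerivAt u (-lam * u x + c) x) :
    lam * (exp (lam * t) * u t) - lam * (exp (lam * s) * u s) =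
      (exp (lam * t) - exp (lam * s)) * c := by
  set g : ℝ → ℝ := fun x => lam * (exp (lam * x) * u x) - c * exp (lam * x)
  have hexp : ∀ x, HasDerivAt (fun y => exp (lam * y)) (exp (lam * x) * lam) x := fun x => by
    simpa using ((hasDerivAt_id x).const_mul lam).exp
  have hgcont : ContinuousOn g (Icc s t) := by fun_prop
  have hgderiv : ∀ x ∈ Ioo s t, HasDerivAt g 0 x := fun x hx => by
    refine ((((hexp x).mul (hode x hx)).const_mul lam).sub ((hexp x).const_mul c)).congr_deriv ?_
    ring
  have := eq_of_hasDerivAt_zero hst hgcont hgderiv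
  simp only [g] at this
  linarith

/-- Example (i) of the paper (`α = 1`): for `u' = −λu + χ_{(0,T)} f`, `u(0) = a`,
one has `u ≡ 0` on `(T₁,T₂)` iff `aλ + (e^{λT} − 1) f = 0`, so simultaneous
uniqueness of `a` and `f` fails. -/
theorem first_order_example (lam : ℝ) (hlam : lam ≠ 0) (a f T T₁ T₂ : ℝ)
    (hT : 0 < T) (hTT₁ : T < T₁) (hT₁T₂ : T₁ < T₂)
    (u : ℝ → ℝ) (hcont : ContinuousOn u (Set.Ici 0)) (hu0 : u 0 = a)
    (hode1 : ∀ t ∈ Set.Ioo (0:ℝ) T, HasDerivAt u (-lam * u t + f) t)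
    (hode2 : ∀ t ∈ Set.Ioi T, HasDerivAt u (-lam * u t) t) :
    (∀ t ∈ Set.Ioo T₁ T₂, u t = 0) ↔
      a * lam + (Real.exp (lam * T) - 1) * f = 0 := by
  have hatT : lam * (exp (lam * T) * u T) = a * lam + (exp (lam * T) - 1) * f := by
    have := mul_exp_mul_sub_eq_of_hasDerivAt_neg_mul_add hT.le
      (hcont.mono Icc_subset_Ici_self) hode1
    rw [mul_zero, exp_zero, one_mul, hu0] at this
    linarith
  have hafter : ∀ t, T < t → lam * (exp (lam * t) * u t) = a * lam + (exp (lam * T) - 1) * f :=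
    fun t ht => by
      have := mul_exp_mul_sub_eq_of_hasDerivAt_neg_mul_add (c := 0) ht.le
        (hcont.mono fun x hx => hT.le.trans hx.1)
        fun x hx => by simpa using hode2 x hx.1
      linarith
  constructor
  · intro hzero
    have hmid : (T₁ + T₂) / 2 ∈ Ioo T₁ T₂ := ⟨by linarith, by linarith⟩
    rw [← hafter _ (hTT₁.trans hmid.1), hzero _ hmid, mul_zero, mul_zero]
  · intro hconst t ht
    have := hafter t (hTT₁.trans ht.1)
    rw [hconst] at this
    simpa [hlam, (exp_pos _).ne'] using this
end

section
/- Let r > 0, let a, b, f ∈ ℝ, and let 0 < T < T₁ < T₂. Suppose u : [0,∞) → ℝ is continuously differentiable, twice differentiable on (0,T) ∪ (T,∞), satisfies u(0) = a, u′(0) = b, u″(t) = −r² u(t) + f for t ∈ (0,T), and u″(t) = −r² u(t) for t > T. Then u(t) = 0 for all t ∈ (T₁,T₂) if and only if a + (cos(rT) − 1) f / r² = 0 and b/r + sin(rT) f / r² = 0. -/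
/-!
With `v = u'`, the quantities `C = (u - c/r²) cos rt - v sin rt / r` and
`S = (u - c/r²) sin rt + v cos rt / r` are first integrals of `u'' = -r² u + c`, and
`u = c/r² + C cos rt + S sin rt`. Since `u` is `C¹`, `C` and `S` are continuous through `t = T`;
comparing their values for `c = f` on `[0, T]` and for `c = 0` on `[T, ∞)` gives
`u(t) = A cos rt + B sin rt` for `t > T`, with `A`, `B` the two expressions of the theorem.
Such a function vanishes near a point only if its value and derivative there vanish, i.e. `A = B = 0`.
-/

open Real Set Filter Topology

lemma eq_of_continuousOn_Icc_of_hasDerivAt_zero {g : ℝ → ℝ} {a b : ℝ} (hab : a < b)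
    (hc : ContinuousOn g (Icc a b)) (hd : ∀ x ∈ Ioo a b, HasDerivAt g 0 x) : g b = g a := by
  obtain ⟨-, -, hslope⟩ := exists_hasDerivAt_eq_slope g (fun _ => 0) hab hc hd
  have hba : b - a ≠ 0 := sub_ne_zero.mpr hab.ne'
  exact sub_eq_zero.mp ((div_eq_zero_iff.mp hslope.symm).resolve_right hba)

noncomputable def oscCos (r c : ℝ) (u v : ℝ → ℝ) (t : ℝ) : ℝ :=
  (u t - c / r ^ 2) * cos (r * t) - v t * sin (r * t) / r

noncomputable def oscSin (r c : ℝ) (u v : ℝ → ℝ) (t : ℝ) : ℝ :=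
  (u t - c / r ^ 2) * sin (r * t) + v t * cos (r * t) / r

section Oscillator

variable {r c : ℝ} {u v : ℝ → ℝ}

lemma oscCos_mul_cos_add_oscSin_mul_sin (t : ℝ) :
    oscCos r c u v t * cos (r * t) + oscSin r c u v t * sin (r * t) = u t - c / r ^ 2 := by
  simp only [oscCos, oscSin]
  linear_combination (u t - c / r ^ 2) * sin_sq_add_cos_sq (r * t)

lemma hasDerivAt_oscCos (hr : r ≠ 0) {t : ℝ} (hu : HasDerivAt u (v t) t)
    (hv : HasDerivAt v (-r ^ 2 * u t + c) t) : HasDerivAt (oscCos r c u v) 0 t := by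
  have hrt : HasDerivAt (r * ·) r t := hasDerivAt_const_mul r
  refine (((hu.sub_const (c / r ^ 2)).mul hrt.cos).sub ((hv.mul hrt.sin).div_const r)).congr_deriv ?_
  field_simp
  ring

lemma hasDerivAt_oscSin (hr : r ≠ 0) {t : ℝ} (hu : HasDerivAt u (v t) t)
    (hv : HasDerivAt v (-r ^ 2 * u t + c) t) : HasDerivAt (oscSin r c u v) 0 t := by
  have hrt : HasDerivAt (r * ·) r t := hasDerivAt_const_mul r
  refine (((hu.sub_const (c / r ^ 2)).mul hrt.sin).add ((hv.mul hrt.cos).div_const r)).congr_deriv ?_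
  field_simp
  ring

lemma ContinuousOn.oscCos {s : Set ℝ} (hu : ContinuousOn u s) (hv : ContinuousOn v s) :
    ContinuousOn (oscCos r c u v) s := by
  unfold _root_.oscCos; fun_prop

lemma ContinuousOn.oscSin {s : Set ℝ} (hu : ContinuousOn u s) (hv : ContinuousOn v s) :
    ContinuousOn (oscSin r c u v) s := by
  unfold _root_.oscSin; fun_prop

lemma oscCos_eq_of_hasDerivAt (hr : r ≠ 0) {a b : ℝ} (hab : a < b) (hu : ContinuousOn u (Icc a b))
    (hv : ContinuousOn v (Icc a b)) (hu' : ∀ t ∈ Ioo a b, HasDerivAt u (v t) t)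
    (hv' : ∀ t ∈ Ioo a b, HasDerivAt v (-r ^ 2 * u t + c) t) :
    oscCos r c u v b = oscCos r c u v a :=
  eq_of_continuousOn_Icc_of_hasDerivAt_zero hab (hu.oscCos hv)
    fun t ht => hasDerivAt_oscCos hr (hu' t ht) (hv' t ht)

lemma oscSin_eq_of_hasDerivAt (hr : r ≠ 0) {a b : ℝ} (hab : a < b) (hu : ContinuousOn u (Icc a b))
    (hv : ContinuousOn v (Icc a b)) (hu' : ∀ t ∈ Ioo a b, HasDerivAt u (v t) t)
    (hv' : ∀ t ∈ Ioo a b, HasDerivAt v (-r ^ 2 * u t + c) t) :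
    oscSin r c u v b = oscSin r c u v a :=
  eq_of_continuousOn_Icc_of_hasDerivAt_zero hab (hu.oscSin hv)
    fun t ht => hasDerivAt_oscSin hr (hu' t ht) (hv' t ht)

end Oscillator

lemma eq_zero_of_cos_add_sin_eventuallyEq_zero {r A B t : ℝ} (hr : r ≠ 0)
    (h : (fun s => A * cos (r * s) + B * sin (r * s)) =ᶠ[𝓝 t] 0) : A = 0 ∧ B = 0 := by
  have hrt : HasDerivAt (r * ·) r t := hasDerivAt_const_mul r
  have hderiv := ((hrt.cos.const_mul A).add (hrt.sin.const_mul B)).unique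
    ((hasDerivAt_const t (0 : ℝ)).congr_of_eventuallyEq h)
  have hval : A * cos (r * t) + B * sin (r * t) = 0 := h.eq_of_nhds
  have hrot : B * cos (r * t) - A * sin (r * t) = 0 := by
    have : r * (B * cos (r * t) - A * sin (r * t)) = 0 := by linear_combination hderiv
    exact (mul_eq_zero.mp this).resolve_left hr
  constructor
  · linear_combination cos (r * t) * hval - sin (r * t) * hrot - A * sin_sq_add_cos_sq (r * t)
  · linear_combination sin (r * t) * hval + cos (r * t) * hrot - B * sin_sq_add_cos_sq (r * t)

theorem eq_cos_add_sin_of_forcing_off {r a b f T : ℝ} (hr : r ≠ 0) (hT : 0 < T) {u u' : ℝ → ℝ}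
    (hderiv : ∀ t ∈ Ici (0 : ℝ), HasDerivWithinAt u (u' t) (Ici 0) t)
    (hcont : ContinuousOn u' (Ici 0)) (hu0 : u 0 = a) (hu'0 : u' 0 = b)
    (hode1 : ∀ t ∈ Ioo (0 : ℝ) T, HasDerivAt u' (-r ^ 2 * u t + f) t)
    (hode2 : ∀ t ∈ Ioi T, HasDerivAt u' (-r ^ 2 * u t) t) {t : ℝ} (ht : T < t) :
    u t = (a + (cos (r * T) - 1) * f / r ^ 2) * cos (r * t)
      + (b / r + sin (r * T) * f / r ^ 2) * sin (r * t) := by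
  have hu : ContinuousOn u (Ici 0) := fun s hs => (hderiv s hs).continuousWithinAt
  have hu' : ∀ s ∈ Ioi (0 : ℝ), HasDerivAt u (u' s) s := fun s hs =>
    (hderiv s (mem_Ici.mpr hs.le)).hasDerivAt (Ici_mem_nhds hs)
  have hIcc : Icc 0 T ⊆ Ici 0 := Icc_subset_Ici_self
  have hIcc' : Icc T t ⊆ Ici 0 := Icc_subset_Ici_iff ht.le |>.mpr hT.le
  have hIoo : Ioo 0 T ⊆ Ioi 0 := Ioo_subset_Ioi_self
  have hIoo' : Ioo T t ⊆ Ioi 0 := fun s hs => hT.trans hs.1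
  have hode2' : ∀ s ∈ Ioo T t, HasDerivAt u' (-r ^ 2 * u s + 0) s := fun s hs => by
    simpa using hode2 s hs.1
  have hC₁ := oscCos_eq_of_hasDerivAt hr hT (hu.mono hIcc) (hcont.mono hIcc)
    (fun s hs => hu' s (hIoo hs)) hode1
  have hS₁ := oscSin_eq_of_hasDerivAt hr hT (hu.mono hIcc) (hcont.mono hIcc)
    (fun s hs => hu' s (hIoo hs)) hode1
  have hC₂ := oscCos_eq_of_hasDerivAt hr ht (hu.mono hIcc') (hcont.mono hIcc')
    (fun s hs => hu' s (hIoo' hs)) hode2'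
  have hS₂ := oscSin_eq_of_hasDerivAt hr ht (hu.mono hIcc') (hcont.mono hIcc')
    (fun s hs => hu' s (hIoo' hs)) hode2'
  have hut := oscCos_mul_cos_add_oscSin_mul_sin (r := r) (c := 0) (u := u) (v := u') t
  rw [hC₂, hS₂] at hut
  simp only [oscCos, oscSin, hu0, hu'0, mul_zero, cos_zero, sin_zero] at hC₁ hS₁ hut
  field_simp at hC₁ hS₁ hut ⊢
  linear_combination cos (r * t) * hC₁ + sin (r * t) * hS₁ - hut

/-- Example (ii) of the paper (`α = 2`): for `u'' = −r²u + χ_{(0,T)} f`,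
`u(0) = a`, `u'(0) = b`, one has `u ≡ 0` on `(T₁,T₂)` iff
`a + (cos rT − 1)f/r² = 0` and `b/r + (sin rT) f/r² = 0`. -/
theorem second_order_example (r : ℝ) (hr : 0 < r) (a b f T T₁ T₂ : ℝ)
    (hT : 0 < T) (hTT₁ : T < T₁) (hT₁T₂ : T₁ < T₂)
    (u u' : ℝ → ℝ)
    (hderiv : ∀ t ∈ Set.Ici (0:ℝ), HasDerivWithinAt u (u' t) (Set.Ici 0) t)
    (hcont : ContinuousOn u' (Set.Ici 0))
    (hu0 : u 0 = a) (hu'0 : u' 0 = b)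
    (hode1 : ∀ t ∈ Set.Ioo (0:ℝ) T, HasDerivAt u' (-r ^ 2 * u t + f) t)
    (hode2 : ∀ t ∈ Set.Ioi T, HasDerivAt u' (-r ^ 2 * u t) t) :
    (∀ t ∈ Set.Ioo T₁ T₂, u t = 0) ↔
      (a + (Real.cos (r * T) - 1) * f / r ^ 2 = 0 ∧
       b / r + Real.sin (r * T) * f / r ^ 2 = 0) := by
  have hu : ∀ t ∈ Ioo T₁ T₂, u t = (a + (cos (r * T) - 1) * f / r ^ 2) * cos (r * t)
      + (b / r + sin (r * T) * f / r ^ 2) * sin (r * t) := fun t ht =>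
    eq_cos_add_sin_of_forcing_off hr.ne' hT hderiv hcont hu0 hu'0 hode1 hode2 (hTT₁.trans ht.1)
  constructor
  · intro hzero
    have hmid : (T₁ + T₂) / 2 ∈ Ioo T₁ T₂ := ⟨by linarith, by linarith⟩
    refine eq_zero_of_cos_add_sin_eventuallyEq_zero (t := (T₁ + T₂) / 2) hr.ne' ?_
    filter_upwards [Ioo_mem_nhds hmid.1 hmid.2] with t ht
    rw [← hu t ht, hzero t ht, Pi.zero_apply]
  · rintro ⟨hA, hB⟩ t ht
    rw [hu t ht, hA, hB]
    ring
end

section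
/- Let α ∈ (0,1) ∪ (1,2), λ > 0, T > 0, a, b ∈ ℝ, and μ ∈ L^∞(0,T). Then the function u(t) := a E_{α,1}(−λ t^{α}) + b t E_{α,2}(−λ t^{α}) + ∫₀^T (t−s)^{α−1} E_{α,α}(−λ (t−s)^{α}) μ(s) ds is real-analytic on the interval (T, ∞). -/
open MeasureTheory

/-- The (real) Mittag-Leffler function `E_{β,γ}(x) = Σ_k x^k / Γ(βk + γ)`. -/
noncomputable def mittagLeffler (β γ x : ℝ) : ℝ :=
  ∑' k : ℕ, x ^ k / Real.Gamma (β * k + γ)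

/-!
Replacing `t` by a complex variable `z` (with principal-branch powers) gives a function that is
holomorphic on the half-plane `T < re z`: the Mittag-Leffler series has infinite radius of
convergence because `Γ(x) / Γ(x + β) → 0`, so `E_{β,γ}` is entire; `z ↦ z ^ p` is holomorphic off
the negative real axis; and the integral over `s ∈ (0, T)` of a kernel holomorphic in `z - s`
against the integrable `μ` is holomorphic by differentiation under the integral sign. On real
`t > T` this function is the real solution, which is therefore real-analytic.
-/

open Filter Set Metric
open scoped Topology

namespace Real

theorem Gamma_div_Gamma_add_le_of_lt_one {β x : ℝ} (hβ0 : 0 < β) (hβ1 : β < 1) (hx : 0 < x) :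
    Gamma x / Gamma (x + β) ≤ (x + β) ^ (1 - β) / x := by
  have hxβ : 0 < x + β := by linarith
  have hΓxβ : 0 < Gamma (x + β) := Gamma_pos_of_pos hxβ
  -- log-convexity of `Γ` between `x + β` and `x + β + 1`, whose `β : 1 - β` mean is `x + 1`
  have hconv := Gamma_mul_add_mul_le_rpow_Gamma_mul_rpow_Gamma (a := β) (b := 1 - β)
    hxβ (by linarith : 0 < x + β + 1) hβ0 (by linarith) (by ring)
  rw [show β * (x + β) + (1 - β) * (x + β + 1) = x + 1 by ring, Gamma_add_one hx.ne',
    Gamma_add_one hxβ.ne', mul_rpow hxβ.le hΓxβ.le, mul_left_comm, ← rpow_add hΓxβ,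
    add_sub_cancel, rpow_one] at hconv
  rw [div_le_div_iff₀ hΓxβ hx]
  linarith

theorem tendsto_Gamma_div_Gamma_add_atTop {β : ℝ} (hβ : 0 < β) :
    Tendsto (fun x => Gamma x / Gamma (x + β)) atTop (𝓝 0) := by
  have hnonneg : ∀ᶠ x in atTop, 0 ≤ Gamma x / Gamma (x + β) := by
    filter_upwards [eventually_gt_atTop 0] with x hx
    exact div_nonneg (Gamma_pos_of_pos hx).le (Gamma_pos_of_pos (by linarith)).le
  rcases lt_or_ge β 1 with hβ1 | hβ1
  · have hlim : Tendsto (fun x => (1 + β / x) * (x + β) ^ (-β)) atTop (𝓝 0) := by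
      simpa using (tendsto_const_nhds.add (tendsto_const_nhds.div_atTop tendsto_id)).mul
        ((tendsto_rpow_neg_atTop hβ).comp (tendsto_atTop_add_const_right _ β tendsto_id))
    refine squeeze_zero' hnonneg ?_ hlim
    filter_upwards [eventually_gt_atTop 0] with x hx
    have hxβ : 0 < x + β := by linarith
    calc Gamma x / Gamma (x + β) ≤ (x + β) ^ (1 - β) / x :=
          Gamma_div_Gamma_add_le_of_lt_one hβ hβ1 hx
      _ = (1 + β / x) * (x + β) ^ (-β) := by
          rw [rpow_sub hxβ, rpow_one, rpow_neg hxβ.le]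
          field_simp
  · refine squeeze_zero' hnonneg ?_ tendsto_inv_atTop_zero
    filter_upwards [eventually_ge_atTop 1] with x hx
    have hΓx : 0 < Gamma x := Gamma_pos_of_pos (by linarith)
    have hmono : Gamma (x + 1) ≤ Gamma (x + β) :=
      Gamma_strictMonoOn_Ici.monotoneOn (mem_Ici.2 (by linarith)) (mem_Ici.2 (by linarith))
        (by linarith)
    calc Gamma x / Gamma (x + β) ≤ Gamma x / Gamma (x + 1) :=
          div_le_div_of_nonneg_left hΓx.le (Gamma_pos_of_pos (by linarith)) hmono
      _ = x⁻¹ := by rw [Gamma_add_one (by linarith)]; field_simp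

end Real

namespace Complex

noncomputable def mittagLefflerSeries (β γ : ℝ) : FormalMultilinearSeries ℂ ℂ ℂ :=
  .ofScalars ℂ fun k : ℕ => (((Real.Gamma (β * k + γ))⁻¹ : ℝ) : ℂ)

noncomputable def mittagLeffler (β γ : ℝ) : ℂ → ℂ :=
  (mittagLefflerSeries β γ).sum

variable {β γ : ℝ}

theorem mittagLefflerSeries_radius (hβ : 0 < β) (hγ : 0 < γ) :
    (mittagLefflerSeries β γ).radius = ⊤ := by
  have hΓ (k : ℕ) : 0 < Real.Gamma (β * k + γ) := Real.Gamma_pos_of_pos (by positivity)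
  refine FormalMultilinearSeries.ofScalars_radius_eq_top_of_tendsto _ _
    (.of_forall fun k => by simp [(hΓ k).ne']) ?_
  have hshift : Tendsto (fun k : ℕ => β * k + γ) atTop atTop :=
    tendsto_atTop_add_const_right _ _ (tendsto_natCast_atTop_atTop.const_mul_atTop hβ)
  refine ((Real.tendsto_Gamma_div_Gamma_add_atTop hβ).comp hshift).congr fun k => ?_
  rw [Function.comp_apply, norm_real, norm_real, norm_inv, norm_inv,
    Real.norm_of_nonneg (hΓ _).le, Real.norm_of_nonneg (hΓ _).le, inv_div_inv]
  push_cast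
  ring_nf

theorem differentiable_mittagLeffler (hβ : 0 < β) (hγ : 0 < γ) :
    Differentiable ℂ (mittagLeffler β γ) := by
  have h := (mittagLefflerSeries β γ).hasFPowerSeriesOnBall
    (by simp [mittagLefflerSeries_radius hβ hγ])
  rw [mittagLefflerSeries_radius hβ hγ] at h
  exact fun z => (h.analyticAt_of_mem (by simp)).differentiableAt

theorem ofReal_mittagLeffler (β γ x : ℝ) :
    ((_root_.mittagLeffler β γ x : ℝ) : ℂ) = mittagLeffler β γ x := by
  rw [_root_.mittagLeffler, ofReal_tsum]
  refine tsum_congr fun k => ?_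
  simp [mittagLefflerSeries, div_eq_mul_inv]

theorem ofReal_mittagLeffler_mul_rpow {x : ℝ} (hx : 0 ≤ x) (c p : ℝ) :
    ((_root_.mittagLeffler β γ (c * x ^ p) : ℝ) : ℂ) =
      mittagLeffler β γ (c * (x : ℂ) ^ (p : ℂ)) := by
  rw [ofReal_mittagLeffler, ofReal_mul, ofReal_cpow hx]

theorem differentiableOn_mittagLeffler_mul_cpow (hβ : 0 < β) (hγ : 0 < γ) (c p : ℂ) :
    DifferentiableOn ℂ (fun w => mittagLeffler β γ (c * w ^ p)) slitPlane :=
  (differentiable_mittagLeffler hβ hγ).comp_differentiableOn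
    fun _ hw => ((differentiableAt_id.cpow_const hw).const_mul c).differentiableWithinAt

end Complex

theorem DifferentiableOn.differentiableAt_integral_comp_sub_mul {f : ℂ → ℂ} {U : Set ℂ}
    (hf : DifferentiableOn ℂ f U) (hU : IsOpen U) {ν : Measure ℝ} {K : Set ℝ}
    (hK : IsCompact K) (hνK : ∀ᵐ s ∂ν, s ∈ K) {g : ℝ → ℂ} (hg : Integrable g ν) {z₀ : ℂ}
    (hz₀ : ∀ s ∈ K, z₀ - s ∈ U) :
    DifferentiableAt ℂ (fun z => ∫ s, f (z - s) * g s ∂ν) z₀ := by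
  have hL : IsCompact ((fun s : ℝ => z₀ - s) '' K) := hK.image (by fun_prop)
  obtain ⟨δ, hδ, hδU⟩ := hL.exists_cthickening_subset_open hU (image_subset_iff.2 hz₀)
  set C := cthickening δ ((fun s : ℝ => z₀ - s) '' K)
  -- for `z` near `z₀` all the points `z - s`, `s ∈ K`, stay in the compact set `C ⊆ U`,
  -- on which `f` and `deriv f` are bounded
  have hmaps : ∀ z ∈ closedBall z₀ δ, MapsTo (fun s : ℝ => z - s) K C := fun z hz s hs =>
    mem_cthickening_of_dist_le _ _ _ _ (mem_image_of_mem _ hs)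
      (by rwa [dist_sub_right, ← mem_closedBall])
  have hbound : ∀ φ : ℂ → ℂ, ContinuousOn φ U → ∃ M, ∀ w ∈ C, ‖φ w‖ ≤ M := fun φ hφ =>
    hL.cthickening.exists_bound_of_continuousOn (hφ.mono hδU)
  have hmeas : ∀ φ : ℂ → ℂ, ContinuousOn φ U → ∀ z ∈ closedBall z₀ δ,
      AEStronglyMeasurable (fun s : ℝ => φ (z - s) * g s) ν := fun φ hφ z hz => by
    rw [← Measure.restrict_eq_self_of_ae_mem hνK]
    exact (((hφ.mono hδU).comp (by fun_prop) (hmaps z hz)).aestronglyMeasurable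
      hK.measurableSet).mul hg.1.restrict
  have hf' : ContinuousOn (_root_.deriv f) U := (hf.analyticOnNhd hU).deriv.continuousOn
  obtain ⟨M₀, hM₀⟩ := hbound f hf.continuousOn
  obtain ⟨M₁, hM₁⟩ := hbound (_root_.deriv f) hf'
  refine (hasDerivAt_integral_of_dominated_loc_of_deriv_le (ball_mem_nhds z₀ hδ)
    (F' := fun z (s : ℝ) => _root_.deriv f (z - s) * g s) (bound := fun s => M₁ * ‖g s‖)
    ?_ ?_ ?_ ?_ (hg.norm.const_mul M₁) ?_).2.differentiableAt
  · filter_upwards [closedBall_mem_nhds z₀ hδ] with z hz using hmeas f hf.continuousOn z hz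
  · refine (hg.norm.const_mul M₀).mono'
      (hmeas f hf.continuousOn z₀ (mem_closedBall_self hδ.le)) ?_
    filter_upwards [hνK] with s hs
    rw [norm_mul]
    gcongr
    exact hM₀ _ (hmaps z₀ (mem_closedBall_self hδ.le) hs)
  · exact hmeas _ hf' z₀ (mem_closedBall_self hδ.le)
  · filter_upwards [hνK] with s hs z hz
    rw [norm_mul]
    gcongr
    exact hM₁ _ (hmaps z (ball_subset_closedBall hz) hs)
  · filter_upwards [hνK] with s hs z hz
    have hzs : z - s ∈ U := hδU (hmaps z (ball_subset_closedBall hz) hs)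
    exact (((hf.differentiableAt (hU.mem_nhds hzs)).hasDerivAt.comp z
      ((hasDerivAt_id z).sub_const (s : ℂ))).mul_const (g s)).congr_deriv (by simp)

theorem DifferentiableOn.analyticAt_of_eventually_ofReal_eq {G : ℂ → ℂ} {U : Set ℂ}
    (hG : DifferentiableOn ℂ G U) (hU : IsOpen U) {u : ℝ → ℝ} {t : ℝ} (ht : (t : ℂ) ∈ U)
    (hu : ∀ᶠ x in 𝓝 t, (u x : ℂ) = G x) : AnalyticAt ℝ u t := by
  have hGt : AnalyticAt ℝ (fun x : ℝ => G x) t :=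
    (hG.analyticAt (hU.mem_nhds ht)).restrictScalars.comp (Complex.ofRealCLM.analyticAt t)
  refine (Complex.reCLM.analyticAt _).comp hGt |>.congr ?_
  filter_upwards [hu] with x hx
  simp [← hx]

section Solution

open Complex

variable {α lam T : ℝ}

noncomputable def solutionExtension (α lam T a b : ℝ) (μ : ℝ → ℝ) (z : ℂ) : ℂ :=
  a * mittagLeffler α 1 (-lam * z ^ (α : ℂ)) + b * z * mittagLeffler α 2 (-lam * z ^ (α : ℂ)) +
    ∫ s in Ioo 0 T, (z - s) ^ ((α : ℂ) - 1) * mittagLeffler α α (-lam * (z - s) ^ (α : ℂ)) * μ s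

theorem differentiableOn_solutionExtension (hα : 0 < α) (hT : 0 ≤ T) (a b : ℝ) {μ : ℝ → ℝ}
    (hμ : Integrable (fun s => (μ s : ℂ)) (volume.restrict (Ioo 0 T))) :
    DifferentiableOn ℂ (solutionExtension α lam T a b μ) {z | T < z.re} := by
  intro z hz
  have hslit (s : ℝ) (hs : s ≤ T) : z - s ∈ slitPlane := Or.inl (by
    rw [sub_re, ofReal_re]; linarith [hz.out])
  have hE (γ : ℝ) (hγ : 0 < γ) :
      DifferentiableAt ℂ (fun w => mittagLeffler α γ (-lam * w ^ (α : ℂ))) z :=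
    (differentiableOn_mittagLeffler_mul_cpow hα hγ _ _).differentiableAt
      (isOpen_slitPlane.mem_nhds (by simpa using hslit 0 hT))
  have hkernel : DifferentiableOn ℂ
      (fun w => w ^ ((α : ℂ) - 1) * mittagLeffler α α (-lam * w ^ (α : ℂ))) slitPlane :=
    DifferentiableOn.mul (fun w hw => (differentiableAt_id.cpow_const hw).differentiableWithinAt)
      (differentiableOn_mittagLeffler_mul_cpow hα hα _ _)
  have hint := hkernel.differentiableAt_integral_comp_sub_mul isOpen_slitPlane isCompact_Icc
    (ae_restrict_of_forall_mem measurableSet_Ioo Ioo_subset_Icc_self) hμ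
    (fun s hs => hslit s hs.2)
  exact ((((differentiableAt_const _).mul (hE 1 one_pos)).add
    (((differentiableAt_const _).mul differentiableAt_id).mul (hE 2 two_pos))).add
    hint).differentiableWithinAt

theorem ofReal_solution_eq_solutionExtension (a b : ℝ) (μ : ℝ → ℝ) {x : ℝ} (hx : 0 ≤ x)
    (hxT : T ≤ x) :
    ((a * _root_.mittagLeffler α 1 (-lam * x ^ α) +
        b * x * _root_.mittagLeffler α 2 (-lam * x ^ α) +
        ∫ s in Ioo 0 T, (x - s) ^ (α - 1) * _root_.mittagLeffler α α (-lam * (x - s) ^ α) * μ s :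
          ℝ) : ℂ) = solutionExtension α lam T a b μ x := by
  have hkernel : ∀ s ∈ Ioo 0 T,
      (((x - s) ^ (α - 1) * _root_.mittagLeffler α α (-lam * (x - s) ^ α) * μ s : ℝ) : ℂ) =
        (x - s : ℂ) ^ ((α : ℂ) - 1) * mittagLeffler α α (-lam * (x - s : ℂ) ^ (α : ℂ)) * μ s := by
    intro s hs
    have hxs : 0 ≤ x - s := by linarith [hs.2]
    rw [ofReal_mul, ofReal_mul, ofReal_mittagLeffler_mul_rpow hxs, ofReal_cpow hxs]
    push_cast
    rfl
  rw [solutionExtension, ofReal_add, ofReal_add, ← integral_complex_ofReal,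
    setIntegral_congr_fun measurableSet_Ioo hkernel, ofReal_mul, ofReal_mul,
    ofReal_mittagLeffler_mul_rpow hx, ofReal_mittagLeffler_mul_rpow hx]
  push_cast
  rfl

end Solution

theorem solution_analytic_on_Ioi_general (α lam T : ℝ)
    (hα : α ∈ Set.Ioo (0:ℝ) 1 ∪ Set.Ioo (1:ℝ) 2) (hT : 0 < T)
    (a b : ℝ) (μ : ℝ → ℝ)
    (hμ : MemLp μ ⊤ (volume.restrict (Set.Ioo (0:ℝ) T))) :
    AnalyticOnNhd ℝ
      (fun t : ℝ =>
        a * mittagLeffler α 1 (-lam * t ^ α) +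
        b * t * mittagLeffler α 2 (-lam * t ^ α) +
        ∫ s in Set.Ioo (0:ℝ) T,
          (t - s) ^ (α - 1) * mittagLeffler α α (-lam * (t - s) ^ α) * μ s)
      (Set.Ioi T) := by
  have hα0 : 0 < α := by rcases hα with h | h <;> linarith [h.1]
  have hext := differentiableOn_solutionExtension (lam := lam) (μ := μ) hα0 hT.le a b
    (hμ.integrable le_top).ofReal
  intro t ht
  refine hext.analyticAt_of_eventually_ofReal_eq
    (isOpen_lt continuous_const Complex.continuous_re) (by simpa using ht) ?_
  filter_upwards [Ioi_mem_nhds ht] with x hx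
  exact ofReal_solution_eq_solutionExtension a b μ (hT.trans hx).le hx.le

/-- Scalar analogue of Lemma 4: the solution
`u(t) = a E_{α,1}(−λt^α) + b t E_{α,2}(−λt^α)
        + ∫₀^T (t−s)^{α−1} E_{α,α}(−λ(t−s)^α) μ(s) ds`
is real-analytic on `(T,∞)`. -/
theorem solution_analytic_on_Ioi (α lam T : ℝ)
    (hα : α ∈ Set.Ioo (0:ℝ) 1 ∪ Set.Ioo (1:ℝ) 2) (hlam : 0 < lam) (hT : 0 < T)
    (a b : ℝ) (μ : ℝ → ℝ)
    (hμ : MemLp μ ⊤ (volume.restrict (Set.Ioo (0:ℝ) T))) :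
    AnalyticOnNhd ℝ
      (fun t : ℝ =>
        a * mittagLeffler α 1 (-lam * t ^ α) +
        b * t * mittagLeffler α 2 (-lam * t ^ α) +
        ∫ s in Set.Ioo (0:ℝ) T,
          (t - s) ^ (α - 1) * mittagLeffler α α (-lam * (t - s) ^ α) * μ s)
      (Set.Ioi T) :=
  solution_analytic_on_Ioi_general α lam T hα hT a b μ hμ
end
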